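/- Let ρ, σ be density matrices and let Q₊, Q₋ be the positive and negative parts of ρ − σ (so ρ − σ = Q₊ − Q₋, Q₊, Q₋ ≥ 0, Q₊Q₋ = 0). A POVM {E_m} satisfies Σ_m |tr(E_m(ρ−σ))| = tr|ρ−σ| if and only if for each m, Q₊E_m = 0 or Q₋E_m = 0. -/

import Mathlib

/-!
Since `Q₊ Q₋ = 0`, `|Q₊ - Q₋| = Q₊ + Q₋`. With `aₘ = tr (Q₊ Eₘ)` and `bₘ = tr (Q₋ Eₘ)` the two sides
are `∑ₘ |aₘ - bₘ|` and `∑ₘ (aₘ + bₘ)`. For positive semidefinite `A`, `B` one has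
`tr (A B) = ‖√A √B‖²` (Frobenius norm), so `aₘ, bₘ ≥ 0`, and equality holds iff for every `m`
one of `aₘ`, `bₘ` vanishes; finally `tr (A B) = 0` forces `√A √B = 0`, hence `A B = 0`.
-/

open scoped ComplexOrder MatrixOrder

open Classical in
/-- The unique positive semidefinite square root of a positive semidefinite matrix
(junk value 0 otherwise). -/
noncomputable def psqrt {n : Type*} [Fintype n] [DecidableEq n] (X : Matrix n n ℂ) :
    Matrix n n ℂ :=
  if h : X.PosSemidef then
    (h.1.eigenvectorUnitary : Matrix n n ℂ) * Matrix.diagonal ((↑) ∘ (√·) ∘ h.1.eigenvalues) *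
      (star (h.1.eigenvectorUnitary : Matrix n n ℂ))
  else 0

lemma abs_sub_eq_add_iff {α : Type*} [AddCommGroup α] [LinearOrder α] [IsOrderedAddMonoid α]
    {a b : α} (ha : 0 ≤ a) (hb : 0 ≤ b) : |a - b| = a + b ↔ a = 0 ∨ b = 0 := by
  refine ⟨fun h => ?_, ?_⟩
  · rcases le_total b a with hba | hab
    · rw [abs_of_nonneg (sub_nonneg.2 hba), sub_eq_add_neg, add_right_inj] at h
      exact Or.inr (le_antisymm (h.symm.le.trans (neg_nonpos.2 hb)) hb)
    · rw [abs_of_nonpos (sub_nonpos.2 hab), neg_sub, sub_eq_add_neg, add_comm a,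
        add_right_inj] at h
      exact Or.inl (le_antisymm (h.symm.le.trans (neg_nonpos.2 ha)) ha)
  · rintro (rfl | rfl) <;> simp [abs_of_nonneg, ha, hb]

namespace RCLike

variable {K : Type*} [RCLike K]

lemma norm_sub_eq_norm_add_norm_iff {a b : K} (ha : 0 ≤ a) (hb : 0 ≤ b) :
    ‖a - b‖ = ‖a‖ + ‖b‖ ↔ a = 0 ∨ b = 0 := by
  have h : ‖a - b‖ = |‖a‖ - ‖b‖| := by
    conv_lhs => rw [← norm_of_nonneg' ha, ← norm_of_nonneg' hb, ← ofReal_sub, norm_ofReal]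
  rw [h, abs_sub_eq_add_iff (norm_nonneg a) (norm_nonneg b), norm_eq_zero, norm_eq_zero]

lemma sum_norm_sub_eq_sum_add_sum_iff {ι : Type*} [Fintype ι] {a b : ι → K}
    (ha : ∀ i, 0 ≤ a i) (hb : ∀ i, 0 ≤ b i) :
    ((∑ i, ‖a i - b i‖ : ℝ) : K) = ∑ i, a i + ∑ i, b i ↔ ∀ i, a i = 0 ∨ b i = 0 := by
  have hsum : ∑ i, a i + ∑ i, b i = ((∑ i, (‖a i‖ + ‖b i‖) : ℝ) : K) := by
    simp only [ofReal_sum, ofReal_add, norm_of_nonneg' (ha _), norm_of_nonneg' (hb _),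
      Finset.sum_add_distrib]
  rw [hsum, ofReal_inj, Finset.sum_eq_sum_iff_of_le fun i _ => norm_sub_le _ _]
  simp only [Finset.mem_univ, true_implies, norm_sub_eq_norm_add_norm_iff (ha _) (hb _)]

end RCLike

namespace Matrix

variable {n : Type*} [Fintype n] [DecidableEq n]

lemma sum_trace_mul_eq_trace_of_sum_eq_one {R ι : Type*} [Semiring R] [Fintype ι]
    {E : ι → Matrix n n R} (hE : ∑ i, E i = 1) (Q : Matrix n n R) :
    ∑ i, trace (Q * E i) = trace Q := by
  rw [← trace_sum, ← Finset.mul_sum, hE, mul_one]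

namespace PosSemidef

variable {𝕜 : Type*} [RCLike 𝕜] {A B : Matrix n n 𝕜}

lemma trace_mul_eq_trace_conjTranspose_mul_self (hA : A.PosSemidef) (hB : B.PosSemidef) :
    trace (A * B) = trace ((CFC.sqrt A * CFC.sqrt B)ᴴ * (CFC.sqrt A * CFC.sqrt B)) := by
  have hSA : (CFC.sqrt A)ᴴ = CFC.sqrt A := (nonneg_iff_posSemidef.mp (CFC.sqrt_nonneg A)).1
  have hSB : (CFC.sqrt B)ᴴ = CFC.sqrt B := (nonneg_iff_posSemidef.mp (CFC.sqrt_nonneg B)).1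
  conv_lhs => rw [← CFC.sqrt_mul_sqrt_self A hA.nonneg, ← CFC.sqrt_mul_sqrt_self B hB.nonneg]
  rw [conjTranspose_mul, hSA, hSB, ← mul_assoc, trace_mul_comm]
  simp only [mul_assoc]

lemma trace_mul_nonneg (hA : A.PosSemidef) (hB : B.PosSemidef) : 0 ≤ trace (A * B) := by
  rw [hA.trace_mul_eq_trace_conjTranspose_mul_self hB]
  exact (posSemidef_conjTranspose_mul_self _).trace_nonneg

lemma trace_mul_eq_zero_iff (hA : A.PosSemidef) (hB : B.PosSemidef) :
    trace (A * B) = 0 ↔ A * B = 0 := by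
  refine ⟨fun h => ?_, fun h => by rw [h, trace_zero]⟩
  rw [hA.trace_mul_eq_trace_conjTranspose_mul_self hB,
    trace_conjTranspose_mul_self_eq_zero_iff] at h
  calc A * B = CFC.sqrt A * (CFC.sqrt A * CFC.sqrt B) * CFC.sqrt B := by
        conv_lhs =>
          rw [← CFC.sqrt_mul_sqrt_self A hA.nonneg, ← CFC.sqrt_mul_sqrt_self B hB.nonneg]
        noncomm_ring
    _ = 0 := by rw [h, mul_zero, zero_mul]

end PosSemidef

end Matrix

section psqrt

open Matrix

variable {n : Type*} [Fintype n] [DecidableEq n]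

lemma psqrt_eq_cfcSqrt {X : Matrix n n ℂ} (hX : X.PosSemidef) : psqrt X = CFC.sqrt X := by
  rw [CFC.sqrt_eq_real_sqrt X hX.nonneg, cfcₙ_eq_cfc, hX.1.cfc_eq, IsHermitian.cfc,
    Unitary.conjStarAlgAut_apply, psqrt, dif_pos hX]
  rfl

lemma psqrt_conjTranspose_mul_self_sub {P Q : Matrix n n ℂ} (hP : P.PosSemidef)
    (hQ : Q.PosSemidef) (hPQ : P * Q = 0) : psqrt ((P - Q)ᴴ * (P - Q)) = P + Q := by
  have hQP : Q * P = 0 := by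
    simpa [conjTranspose_mul, hP.1.eq, hQ.1.eq] using congrArg conjTranspose hPQ
  have hsq : (P - Q)ᴴ * (P - Q) = (P + Q) ^ 2 := by
    rw [conjTranspose_sub, hP.1.eq, hQ.1.eq, sq, sub_mul, mul_sub, mul_sub, add_mul, mul_add,
      mul_add, hPQ, hQP]
    abel
  rw [psqrt_eq_cfcSqrt (posSemidef_conjTranspose_mul_self _), hsq,
    CFC.sqrt_sq _ (hP.add hQ).nonneg]

end psqrt

open Matrix in
theorem povm_trace_distance_optimal_iff_general
    {n ι : Type*} [Fintype n] [DecidableEq n] [Fintype ι]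
    (rho sigma Qp Qm : Matrix n n ℂ)
    (hQp : Qp.PosSemidef) (hQm : Qm.PosSemidef)
    (hdec : rho - sigma = Qp - Qm) (horth : Qp * Qm = 0)
    (E : ι → Matrix n n ℂ) (hE : ∀ m, (E m).PosSemidef) (hEsum : ∑ m, E m = 1) :
    ((∑ m, ‖Matrix.trace (E m * (rho - sigma))‖ : ℝ) : ℂ)
        = Matrix.trace (psqrt ((rho - sigma)ᴴ * (rho - sigma))) ↔
      ∀ m, Qp * E m = 0 ∨ Qm * E m = 0 := by
  have htr (m : ι) : trace (E m * (Qp - Qm)) = trace (Qp * E m) - trace (Qm * E m) := by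
    rw [trace_mul_comm, sub_mul, trace_sub]
  rw [hdec, psqrt_conjTranspose_mul_self_sub hQp hQm horth, trace_add,
    ← sum_trace_mul_eq_trace_of_sum_eq_one hEsum Qp,
    ← sum_trace_mul_eq_trace_of_sum_eq_one hEsum Qm]
  simp only [htr]
  refine (RCLike.sum_norm_sub_eq_sum_add_sum_iff (fun m => hQp.trace_mul_nonneg (hE m))
    (fun m => hQm.trace_mul_nonneg (hE m))).trans ?_
  simp only [hQp.trace_mul_eq_zero_iff (hE _), hQm.trace_mul_eq_zero_iff (hE _)]

open Matrix in
/-- A POVM attains the trace distance between ρ and σ iff each element annihilates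
the positive or the negative part of ρ − σ. -/
theorem povm_trace_distance_optimal_iff
    {n ι : Type*} [Fintype n] [DecidableEq n] [Fintype ι]
    (rho sigma Qp Qm : Matrix n n ℂ)
    (hrho : rho.PosSemidef) (hsigma : sigma.PosSemidef)
    (htrr : rho.trace = 1) (htrs : sigma.trace = 1)
    (hQp : Qp.PosSemidef) (hQm : Qm.PosSemidef)
    (hdec : rho - sigma = Qp - Qm) (horth : Qp * Qm = 0)
    (E : ι → Matrix n n ℂ) (hE : ∀ m, (E m).PosSemidef) (hEsum : ∑ m, E m = 1) :
    ((∑ m, ‖Matrix.trace (E m * (rho - sigma))‖ : ℝ) : ℂ)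
        = Matrix.trace (psqrt ((rho - sigma)ᴴ * (rho - sigma))) ↔
      ∀ m, Qp * E m = 0 ∨ Qm * E m = 0 :=
  povm_trace_distance_optimal_iff_general rho sigma Qp Qm hQp hQm hdec horth E hE hEsum
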